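/- arXiv:2604.24571 — 2 statements merged into one kernel-verified Lean document; each statement's English description precedes it below -/
import Mathlib

section
/- Let T be a spanning tree of G, let L be a set of leaves of T, each of degree at least 2 in G, and for each v ∈ L let q(v) be a G-neighbor of v distinct from its T-parent p(v), with q(v) ∉ L for all v ∈ L. Let A, B ⊆ L be disjoint. Define T_A from T by replacing edge v·p(v) with v·q(v) for every v ∈ A, and T_B analogously. Then T_A and T_B are spanning trees of G and |E(T_A) △ E(T_B)| = 2(|A| + |B|). -/
/-!
Let `S ⊆ L` be the set of swapped leaves. A leaf `v ∈ S` of `T` is not an interior vertex of any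
`T`-path, so `T`-paths between vertices outside `S` survive the swap, and each `v ∈ S` is attached
to `q v ∉ S`: the swapped graph is connected. In it `v ∈ S` has `q v` as its only neighbour, so no
cycle meets `S`, and a cycle avoiding `S` would be a cycle of `T`. The removed edges `v·p(v)` lie
in `T`, the added edges `v·q(v)` do not, and both `v ↦ v·p(v)` and `v ↦ v·q(v)` are injective on
`L`; hence the symmetric difference is the disjoint union of the removed and of the added edges
over `A ∪ B`.
-/

/-- The tree obtained from `T` by replacing, for each `v ∈ S`, the edge `v (p v)` by
the edge `v (q v)`. -/
def swapTree {V : Type*} (T : SimpleGraph V) (p q : V → V) (S : Finset V) :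
    SimpleGraph V :=
  SimpleGraph.fromEdgeSet
    ((T.edgeSet \ {e | ∃ v ∈ S, e = s(v, p v)}) ∪ {e | ∃ v ∈ S, e = s(v, q v)})

open SimpleGraph

theorem Set.symmDiff_diff_union_diff_union {α : Type*} {E D₁ D₂ N₁ N₂ : Set α}
    (hD₁ : D₁ ⊆ E) (hD₂ : D₂ ⊆ E) (hN₁ : Disjoint N₁ E) (hN₂ : Disjoint N₂ E)
    (hD : Disjoint D₁ D₂) (hN : Disjoint N₁ N₂) :
    symmDiff (E \ D₁ ∪ N₁) (E \ D₂ ∪ N₂) = (D₁ ∪ D₂) ∪ (N₁ ∪ N₂) := by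
  ext e
  have h₁ : e ∈ D₁ → e ∈ E := @hD₁ e
  have h₂ : e ∈ D₂ → e ∈ E := @hD₂ e
  have h₃ : e ∈ N₁ → e ∉ E := fun h ↦ Set.disjoint_left.mp hN₁ h
  have h₄ : e ∈ N₂ → e ∉ E := fun h ↦ Set.disjoint_left.mp hN₂ h
  have h₅ : e ∈ D₁ → e ∉ D₂ := fun h ↦ Set.disjoint_left.mp hD h
  have h₆ : e ∈ N₁ → e ∉ N₂ := fun h ↦ Set.disjoint_left.mp hN h
  simp only [Set.mem_symmDiff, Set.mem_union, Set.mem_sdiff]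
  tauto

namespace SimpleGraph

variable {V : Type*}

namespace Walk

variable {H : SimpleGraph V} {a b v w : V}

theorem ncard_neighborSet_toSubgraph_le_one (c : H.Walk a b) (hv : H.neighborSet v ⊆ {w}) :
    (c.toSubgraph.neighborSet v).ncard ≤ 1 :=
  (Set.ncard_le_ncard fun _ hx ↦ hv (c.toSubgraph.adj_sub hx)).trans (Set.ncard_singleton w).le

theorem IsPath.notMem_support_of_neighborSet_subset {P : H.Walk a b} (hP : P.IsPath)
    (hv : H.neighborSet v ⊆ {w}) (ha : v ≠ a) (hb : v ≠ b) : v ∉ P.support := by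
  intro hmem
  obtain ⟨i, rfl, hi⟩ := mem_support_iff_exists_getVert.mp hmem
  have hi₀ : i ≠ 0 := by rintro rfl; exact ha P.getVert_zero
  have hil : i < P.length := hi.lt_of_ne (by rintro rfl; exact hb P.getVert_length)
  have := hP.ncard_neighborSet_toSubgraph_internal_eq_two hi₀ hil
  have := P.ncard_neighborSet_toSubgraph_le_one hv
  omega

theorem IsCycle.notMem_support_of_neighborSet_subset {c : H.Walk a a} (hc : c.IsCycle)
    (hv : H.neighborSet v ⊆ {w}) : v ∉ c.support := fun hmem ↦ by
  have := hc.ncard_neighborSet_toSubgraph_eq_two hmem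
  have := c.ncard_neighborSet_toSubgraph_le_one hv
  omega

theorem edges_subset_edgeSet_of_support_subset {H' : SimpleGraph V} (c : H.Walk a b)
    {s : Set V} (hs : ∀ x ∈ c.support, x ∈ s) (h : ∀ x ∈ s, ∀ y ∈ s, H.Adj x y → H'.Adj x y) :
    ∀ e ∈ c.edges, e ∈ H'.edgeSet := by
  intro e he
  induction e using Sym2.ind with
  | h x y =>
    exact h x (hs x (c.fst_mem_support_of_mem_edges he)) y
      (hs y (c.snd_mem_support_of_mem_edges he)) (c.adj_of_mem_edges he)

end Walk

theorem Connected.eq_or_eq_of_neighborSet_eq_singleton {T : SimpleGraph V} (hT : T.Connected)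
    {u v : V} (hu : T.neighborSet u = {v}) (hv : T.neighborSet v = {u}) (x : V) :
    x = u ∨ x = v := by
  suffices ∀ a b (c : T.Walk a b), (a = u ∨ a = v) → b = u ∨ b = v from
    this u x (hT u x).some (Or.inl rfl)
  intro a b c
  induction c with
  | nil => exact id
  | @cons a a' b h c ih =>
    rintro (rfl | rfl)
    · exact ih (Or.inr (hu ▸ h : a' ∈ ({v} : Set V)))
    · exact ih (Or.inl (hv ▸ h : a' ∈ ({u} : Set V)))

end SimpleGraph

section swapTree

variable {V : Type*} {G T : SimpleGraph V} {p q : V → V} {S : Finset V} {x y v : V}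

theorem edgeSet_swapTree (hqv : ∀ v ∈ S, q v ≠ v) :
    (swapTree T p q S).edgeSet =
      T.edgeSet \ (fun v ↦ s(v, p v)) '' S ∪ (fun v ↦ s(v, q v)) '' S := by
  have himage (f : V → Sym2 V) : {e | ∃ v ∈ S, e = f v} = f '' S := by
    ext; simp [eq_comm]
  rw [swapTree, edgeSet_fromEdgeSet, himage, himage, sdiff_eq_left, Set.disjoint_left]
  rintro _ (⟨he, -⟩ | ⟨v, hv, rfl⟩)
  · exact T.not_isDiag_of_mem_edgeSet he
  · exact fun hdiag ↦ hqv v hv (Sym2.mk_isDiag_iff.mp hdiag).symm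

theorem swapTree_le (hsub : T ≤ G) (hqG : ∀ v ∈ S, G.Adj v (q v)) : swapTree T p q S ≤ G := by
  intro x y h
  obtain ⟨⟨hxy, -⟩ | ⟨v, hv, he⟩, -⟩ := (fromEdgeSet_adj _).mp h
  · exact hsub hxy
  · rcases Sym2.eq_iff.mp he with ⟨rfl, rfl⟩ | ⟨rfl, rfl⟩
    exacts [hqG _ hv, (hqG _ hv).symm]

theorem swapTree_adj_self (hqv : ∀ v ∈ S, q v ≠ v) (hv : v ∈ S) :
    (swapTree T p q S).Adj v (q v) :=
  (fromEdgeSet_adj _).mpr ⟨Or.inr ⟨v, hv, rfl⟩, (hqv v hv).symm⟩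

theorem neighborSet_swapTree_subset (hleaf : ∀ v ∈ S, T.neighborSet v = {p v})
    (hqS : ∀ v ∈ S, q v ∉ S) (hv : v ∈ S) : (swapTree T p q S).neighborSet v ⊆ {q v} := by
  intro z hz
  obtain ⟨⟨hvz, hkept⟩ | ⟨w, hw, he⟩, -⟩ := (fromEdgeSet_adj _).mp hz
  · have hz : z ∈ T.neighborSet v := hvz
    rw [hleaf v hv, Set.mem_singleton_iff] at hz
    exact absurd ⟨v, hv, hz ▸ rfl⟩ hkept
  · rcases Sym2.eq_iff.mp he with ⟨rfl, rfl⟩ | ⟨rfl, -⟩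
    exacts [rfl, absurd hv (hqS w hw)]

theorem swapTree_adj_of_notMem (hx : x ∉ S) (hy : y ∉ S) (h : T.Adj x y) :
    (swapTree T p q S).Adj x y := by
  refine (fromEdgeSet_adj _).mpr ⟨Or.inl ⟨h, ?_⟩, h.ne⟩
  rintro ⟨v, hv, he⟩
  rcases Sym2.eq_iff.mp he with ⟨rfl, -⟩ | ⟨-, rfl⟩
  exacts [hx hv, hy hv]

theorem adj_of_swapTree_adj (hx : x ∉ S) (hy : y ∉ S) (h : (swapTree T p q S).Adj x y) :
    T.Adj x y := by
  obtain ⟨⟨hxy, -⟩ | ⟨v, hv, he⟩, -⟩ := (fromEdgeSet_adj _).mp h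
  · exact hxy
  · rcases Sym2.eq_iff.mp he with ⟨rfl, -⟩ | ⟨-, rfl⟩
    exacts [absurd hv hx, absurd hv hy]

theorem connected_swapTree (hT : T.Connected) (hleaf : ∀ v ∈ S, T.neighborSet v = {p v})
    (hqv : ∀ v ∈ S, q v ≠ v) (hqS : ∀ v ∈ S, q v ∉ S) : (swapTree T p q S).Connected := by
  classical
  have hkept : ∀ x ∉ S, ∀ y ∉ S, (swapTree T p q S).Reachable x y := by
    intro x hx y hy
    let P := (hT x y).some.toPath
    have hP : ∀ z ∈ P.1.support, z ∈ (↑S : Set V)ᶜ := fun z hz hzS ↦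
      P.2.notMem_support_of_neighborSet_subset (hleaf z hzS).le
        (by rintro rfl; exact hx hzS) (by rintro rfl; exact hy hzS) hz
    exact ⟨P.1.transfer _ <| P.1.edges_subset_edgeSet_of_support_subset hP
      fun x hx y hy ↦ swapTree_adj_of_notMem hx hy⟩
  have hexit : ∀ x, ∃ x' ∉ S, (swapTree T p q S).Reachable x x' := by
    intro x
    by_cases hx : x ∈ S
    · exact ⟨q x, hqS x hx, (swapTree_adj_self hqv hx).reachable⟩
    · exact ⟨x, hx, .rfl⟩
  have := hT.nonempty
  refine ⟨fun x y ↦ ?_⟩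
  obtain ⟨x', hx', hxx'⟩ := hexit x
  obtain ⟨y', hy', hyy'⟩ := hexit y
  exact hxx'.trans ((hkept x' hx' y' hy').trans hyy'.symm)

theorem isAcyclic_swapTree (hT : T.IsAcyclic) (hleaf : ∀ v ∈ S, T.neighborSet v = {p v})
    (hqS : ∀ v ∈ S, q v ∉ S) : (swapTree T p q S).IsAcyclic := by
  intro u c hc
  have hc' : ∀ z ∈ c.support, z ∈ (↑S : Set V)ᶜ := fun z hz hzS ↦
    hc.notMem_support_of_neighborSet_subset (neighborSet_swapTree_subset hleaf hqS hzS) hz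
  have hE := c.edges_subset_edgeSet_of_support_subset hc' fun x hx y hy ↦ adj_of_swapTree_adj hx hy
  exact hT (c.transfer T hE) (hc.transfer hE)

theorem isTree_swapTree (hT : T.IsTree) (hleaf : ∀ v ∈ S, T.neighborSet v = {p v})
    (hqv : ∀ v ∈ S, q v ≠ v) (hqS : ∀ v ∈ S, q v ∉ S) : (swapTree T p q S).IsTree :=
  ⟨connected_swapTree hT.connected hleaf hqv hqS, isAcyclic_swapTree hT.isAcyclic hleaf hqS⟩

end swapTree

section leafEdges

variable {V : Type*} {T : SimpleGraph V} {p q : V → V} {L : Set V}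

theorem SimpleGraph.Connected.injOn_leafEdge (hT : T.Connected)
    (hleaf : ∀ v ∈ L, T.neighborSet v = {p v}) (hthird : ∀ v ∈ L, ∃ x, x ≠ v ∧ x ≠ p v) :
    L.InjOn fun v ↦ s(v, p v) := by
  intro u hu v hv huv
  rcases Sym2.eq_iff.mp huv with ⟨h, -⟩ | ⟨rfl, hpu⟩
  · exact h
  · -- `u = p v` and `v = p u`: then `T` is the single edge `uv`, leaving no room for `x`
    obtain ⟨x, hxv, hxu⟩ := hthird v hv
    have hpv : T.neighborSet (p v) = {v} := by rw [hleaf _ hu, hpu]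
    exact ((hT.eq_or_eq_of_neighborSet_eq_singleton (hleaf v hv) hpv x).elim hxv hxu).elim

theorem injOn_swapEdge (hqL : ∀ v ∈ L, q v ∉ L) : L.InjOn fun v ↦ s(v, q v) := by
  intro u hu v hv huv
  rcases Sym2.eq_iff.mp huv with ⟨h, -⟩ | ⟨rfl, -⟩
  exacts [h, absurd hu (hqL v hv)]

theorem image_leafEdge_subset_edgeSet (hleaf : ∀ v ∈ L, T.neighborSet v = {p v}) :
    (fun v ↦ s(v, p v)) '' L ⊆ T.edgeSet := by
  rintro _ ⟨v, hv, rfl⟩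
  exact (hleaf v hv).ge rfl

theorem disjoint_image_swapEdge_edgeSet (hleaf : ∀ v ∈ L, T.neighborSet v = {p v})
    (hqp : ∀ v ∈ L, q v ≠ p v) : Disjoint ((fun v ↦ s(v, q v)) '' L) T.edgeSet := by
  refine Set.disjoint_left.mpr ?_
  rintro _ ⟨v, hv, rfl⟩ hvq
  exact hqp v hv ((hleaf v hv).le hvq)

end leafEdges

theorem ncard_symmDiff_edgeSet_swapTree {V : Type*} {T : SimpleGraph V} {p q : V → V}
    {L A B : Finset V} (hT : T.Connected) (hleaf : ∀ v ∈ L, T.neighborSet v = {p v})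
    (hq : ∀ v ∈ L, q v ≠ v ∧ q v ≠ p v ∧ q v ∉ L)
    (hA : A ⊆ L) (hB : B ⊆ L) (hAB : Disjoint A B) :
    (symmDiff (swapTree T p q A).edgeSet (swapTree T p q B).edgeSet).ncard =
      2 * (A.card + B.card) := by
  classical
  have hf : (L : Set V).InjOn fun v ↦ s(v, p v) :=
    hT.injOn_leafEdge hleaf fun v hv ↦ ⟨q v, (hq v hv).1, (hq v hv).2.1⟩
  have hg : (L : Set V).InjOn fun v ↦ s(v, q v) := injOn_swapEdge fun v hv ↦ (hq v hv).2.2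
  have hfT : (fun v ↦ s(v, p v)) '' (L : Set V) ⊆ T.edgeSet := image_leafEdge_subset_edgeSet hleaf
  have hgT : Disjoint ((fun v ↦ s(v, q v)) '' (L : Set V)) T.edgeSet :=
    disjoint_image_swapEdge_edgeSet hleaf fun v hv ↦ (hq v hv).2.1
  have hAL : (A : Set V) ⊆ L := Finset.coe_subset.mpr hA
  have hBL : (B : Set V) ⊆ L := Finset.coe_subset.mpr hB
  have hABL : ((A ∪ B : Finset V) : Set V) ⊆ L := Finset.coe_subset.mpr (Finset.union_subset hA hB)
  rw [edgeSet_swapTree fun v hv ↦ (hq v (hA hv)).1, edgeSet_swapTree fun v hv ↦ (hq v (hB hv)).1,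
    Set.symmDiff_diff_union_diff_union ((Set.image_mono hAL).trans hfT)
      ((Set.image_mono hBL).trans hfT) (hgT.mono_left (Set.image_mono hAL))
      (hgT.mono_left (Set.image_mono hBL)) ((Finset.disjoint_coe.mpr hAB).image hf hAL hBL)
      ((Finset.disjoint_coe.mpr hAB).image hg hAL hBL),
    ← Set.image_union, ← Set.image_union, ← Finset.coe_union,
    Set.ncard_union_eq ((hgT.mono_left (Set.image_mono hABL)).symm.mono_left
      ((Set.image_mono hABL).trans hfT)),
    (hf.mono hABL).ncard_image, (hg.mono hABL).ncard_image, Set.ncard_coe_finset,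
    Finset.card_union_of_disjoint hAB]
  ring

theorem stmt6_general {V : Type*} (G T : SimpleGraph V)
    (hsub : T ≤ G) (hT : T.IsTree)
    (L : Finset V) (p q : V → V)
    (hleaf : ∀ v ∈ L, T.neighborSet v = {p v})
    (hq : ∀ v ∈ L, G.Adj v (q v) ∧ q v ≠ p v ∧ q v ∉ L)
    (A B : Finset V) (hA : A ⊆ L) (hB : B ⊆ L) (hAB : Disjoint A B) :
    (swapTree T p q A ≤ G ∧ (swapTree T p q A).IsTree) ∧
      (swapTree T p q B ≤ G ∧ (swapTree T p q B).IsTree) ∧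
      (symmDiff (swapTree T p q A).edgeSet (swapTree T p q B).edgeSet).ncard
        = 2 * (A.card + B.card) := by
  have hqv : ∀ v ∈ L, q v ≠ v := fun v hv ↦ (hq v hv).1.ne'
  have hswap {S : Finset V} (hS : S ⊆ L) : swapTree T p q S ≤ G ∧ (swapTree T p q S).IsTree :=
    ⟨swapTree_le hsub fun v hv ↦ (hq v (hS hv)).1,
      isTree_swapTree hT (fun v hv ↦ hleaf v (hS hv)) (fun v hv ↦ hqv v (hS hv))
        fun v hv hqS ↦ (hq v (hS hv)).2.2 (hS hqS)⟩
  exact ⟨hswap hA, hswap hB, ncard_symmDiff_edgeSet_swapTree hT.connected hleaf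
    (fun v hv ↦ ⟨hqv v hv, (hq v hv).2⟩) hA hB hAB⟩

/-- Swapping leaf edges on disjoint sets A, B of leaves yields two spanning trees whose
edge symmetric difference has cardinality exactly 2(|A| + |B|). -/
theorem stmt6 {V : Type*} [Fintype V] (G T : SimpleGraph V)
    (hG : G.Connected) (hsub : T ≤ G) (hT : T.IsTree)
    (L : Finset V) (p q : V → V)
    (hleaf : ∀ v ∈ L, T.neighborSet v = {p v})
    (hdeg : ∀ v ∈ L, 2 ≤ (G.neighborSet v).ncard)
    (hq : ∀ v ∈ L, G.Adj v (q v) ∧ q v ≠ p v ∧ q v ∉ L)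
    (A B : Finset V) (hA : A ⊆ L) (hB : B ⊆ L) (hAB : Disjoint A B) :
    (swapTree T p q A ≤ G ∧ (swapTree T p q A).IsTree) ∧
      (swapTree T p q B ≤ G ∧ (swapTree T p q B).IsTree) ∧
      (symmDiff (swapTree T p q A).edgeSet (swapTree T p q B).edgeSet).ncard
        = 2 * (A.card + B.card) :=
  stmt6_general G T hsub hT L p q hleaf hq A B hA hB hAB
end

section
/- Let T be a spanning tree of a connected graph G with s leaves, let P = (v_0, ..., v_d) with d ≥ 7 be a path in T whose internal vertices have degree 2 in T, and suppose some vertex v ∈ {v_3, ..., v_{d−3}} has a neighbor w in G with vw ∉ E(T). Then G has a spanning tree with at least s + 1 leaves, and every leaf of the new tree that is not a leaf of T is an internal vertex of P. -/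
/-!
Write `v = v_i`. As `v` has `T`-degree 2, the `T`-path from `v` to `x` leaves `v` along `P`, say
towards `v_{i+1}`, and as `v_{i+1}` has degree 2 too, it continues to `v_{i+2}`. So `v_{i+1}v_{i+2}`
lies on the unique cycle of `T + vx`, and `T + vx - v_{i+1}v_{i+2}` is a spanning tree of `G`. Its
leaves include `v_{i+1}`, `v_{i+2}` (unless `x = v_{i+2}`) and every leaf of `T` except possibly
`x`; the only other vertices whose degree changes, `v` and `x`, gain an edge, so they are not new
leaves. The bounds `3 ≤ i ≤ d - 3` keep `v_{i±1}` and `v_{i±2}` internal to `P`.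
-/

open Finset

namespace SimpleGraph

variable {V : Type*} {G T : SimpleGraph V}

lemma eq_or_eq_of_degree_eq_two {c a b y : V} [Fintype (G.neighborSet c)]
    (h2 : G.degree c = 2) (ha : G.Adj c a) (hb : G.Adj c b) (hab : a ≠ b) (hy : G.Adj c y) :
    y = a ∨ y = b := by
  classical
  have hN : G.neighborFinset c = {a, b} :=
    (eq_of_subset_of_card_le (by simp [insert_subset_iff, ha, hb])
      (by simp [card_pair hab, h2])).symm
  simpa [hN] using (G.mem_neighborFinset c y).2 hy

lemma Walk.IsPath.mk_snd_mem_edges {v x d : V} {p : G.Walk v x} (hp : p.IsPath) (hvx : v ≠ x)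
    (hx : p.snd ≠ x) [Fintype (G.neighborSet p.snd)] (h2 : G.degree p.snd = 2)
    (hd : G.Adj p.snd d) (hvd : v ≠ d) : s(p.snd, d) ∈ p.edges := by
  have hnil : ¬p.Nil := Walk.not_nil_of_ne hvx
  have hlen : 1 < p.length := by
    by_contra! h
    have : p.length = 1 := by
      have := Walk.not_nil_iff_lt_length.mp hnil
      omega
    exact hx (by simp [Walk.snd, ← this])
  have hthird : p.getVert 2 = d := by
    refine (eq_or_eq_of_degree_eq_two h2 (Walk.adj_snd hnil).symm hd hvd
      (p.adj_getVert_succ hlen)).resolve_left ?_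
    rw [hp.getVert_eq_start_iff hlen]
    omega
  exact (Walk.mk_mem_edges_iff_exists p).2 ⟨1, hlen, by rw [← hthird]⟩

def exchange (T : SimpleGraph V) (u x c d : V) : SimpleGraph V :=
  (T ⊔ edge u x).deleteEdges {s(c, d)}

variable {u x c d : V}

@[simp]
lemma exchange_adj {y z : V} :
    (T.exchange u x c d).Adj y z ↔
      (T.Adj y z ∨ s(u, x) = s(y, z) ∧ y ≠ z) ∧ s(y, z) ≠ s(c, d) := by
  simp only [exchange, deleteEdges_adj, sup_adj, adj_edge, Set.mem_singleton_iff]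

lemma exchange_comm_right : T.exchange u x c d = T.exchange u x d c := by
  simp [exchange, Sym2.eq_swap]

lemma exchange_comm_left : T.exchange u x c d = T.exchange x u c d := by
  simp [exchange, edge_comm]

lemma exchange_le (hT : T ≤ G) (h : G.Adj u x) : T.exchange u x c d ≤ G :=
  (deleteEdges_le _).trans (sup_le hT ((edge_le_iff G).2 (Or.inr h)))

lemma edgeSet_exchange (hux : u ≠ x) :
    (T.exchange u x c d).edgeSet = insert s(u, x) T.edgeSet \ {s(c, d)} := by
  rw [exchange, edgeSet_deleteEdges, edgeSet_sup, edgeSet_edge_of_ne hux, Set.union_singleton]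

lemma IsTree.exchange [Finite V] (hT : T.IsTree) (hux : u ≠ x) (hn : ¬T.Adj u x)
    {p : T.Walk x u} (hp : p.IsPath) (hf : s(c, d) ∈ p.edges) :
    (T.exchange u x c d).IsTree := by
  have hadj : (T ⊔ edge u x).Adj u x := Or.inr ((adj_edge _ _).2 ⟨rfl, hux⟩)
  have hcycle : (Walk.cons hadj (p.mapLe le_sup_left)).IsCycle := by
    refine (Walk.cons_isCycle_iff _ _).2 ⟨hp.mapLe _, ?_⟩
    rw [Walk.edges_mapLe_eq_edges]
    exact fun h ↦ hn (p.edges_subset_edgeSet h)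
  rw [isTree_iff_connected_and_card]
  refine ⟨(hT.connected.mono le_sup_left).connected_delete_edge_of_not_isBridge ?_, ?_⟩
  · rw [isBridge_iff, not_not]
    exact (adj_and_reachable_delete_edges_iff_exists_cycle.2
      ⟨u, _, hcycle, by simp [hf]⟩).2
  · rw [← (isTree_iff_connected_and_card.1 hT).2, Nat.card_coe_set_eq, Nat.card_coe_set_eq,
      edgeSet_exchange hux, Set.ncard_exchange' (s := T.edgeSet) hn (p.edges_subset_edgeSet hf)]

section Leaves

open scoped Classical

variable [Fintype V]

lemma degree_exchange_of_ne {z : V} (hu : z ≠ u) (hx : z ≠ x) (hc : z ≠ c) (hd : z ≠ d) :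
    (T.exchange u x c d).degree z = T.degree z := by
  simp only [← card_neighborFinset_eq_degree]
  congr 1
  ext y
  simp only [mem_neighborFinset, exchange_adj, Sym2.eq_iff]
  grind

lemma degree_exchange_add_one (hcu : c ≠ u) (hcx : c ≠ x) (hcd : T.Adj c d) :
    (T.exchange u x c d).degree c + 1 = T.degree c := by
  have hN : (T.exchange u x c d).neighborFinset c = (T.neighborFinset c).erase d := by
    ext y
    simp only [mem_neighborFinset, exchange_adj, Sym2.eq_iff, mem_erase]
    grind
  rw [← card_neighborFinset_eq_degree, ← card_neighborFinset_eq_degree, hN,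
    card_erase_add_one ((T.mem_neighborFinset c d).2 hcd)]

lemma degree_exchange_eq_add_one (huc : u ≠ c) (hud : u ≠ d) (hux : u ≠ x) (hn : ¬T.Adj u x) :
    (T.exchange u x c d).degree u = T.degree u + 1 := by
  have hN : (T.exchange u x c d).neighborFinset u = insert x (T.neighborFinset u) := by
    ext y
    simp only [mem_neighborFinset, exchange_adj, Sym2.eq_iff, mem_insert]
    grind
  rw [← card_neighborFinset_eq_degree, ← card_neighborFinset_eq_degree, hN,
    card_insert_of_notMem (by simpa using hn)]

noncomputable def leafFinset (T : SimpleGraph V) : Finset V := univ.filter fun z ↦ T.degree z = 1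

@[simp]
lemma mem_leafFinset {z : V} : z ∈ T.leafFinset ↔ T.degree z = 1 := by
  simp [leafFinset]

lemma card_leafFinset_exchange (huc : u ≠ c) (hud : u ≠ d) (hcx : c ≠ x)
    (hcd : T.Adj c d) (hu : T.degree u ≠ 1) (hc : T.degree c = 2) (hd : T.degree d = 2) :
    #T.leafFinset + 1 ≤ #(T.exchange u x c d).leafFinset := by
  have hsub : insert c ((insert d T.leafFinset).erase x) ⊆ (T.exchange u x c d).leafFinset := by
    intro z hz
    simp only [mem_insert, mem_erase, mem_leafFinset] at hz ⊢
    rcases hz with rfl | ⟨hzx, rfl | hz⟩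
    · have := degree_exchange_add_one huc.symm hcx hcd
      omega
    · have := degree_exchange_add_one (T := T) (u := u) hud.symm hzx hcd.symm
      rw [exchange_comm_right]
      omega
    · rw [degree_exchange_of_ne] <;> grind
  have hc' : c ∉ (insert d T.leafFinset).erase x := by simp [hcd.ne, hc]
  have hd' : d ∉ T.leafFinset := by simp [hd]
  calc #T.leafFinset + 1 = #(insert d T.leafFinset) := (card_insert_of_notMem hd').symm
    _ ≤ #((insert d T.leafFinset).erase x) + 1 := by
      have := pred_card_le_card_erase (s := insert d T.leafFinset) (a := x)
      omega
    _ = #(insert c ((insert d T.leafFinset).erase x)) := (card_insert_of_notMem hc').symm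
    _ ≤ #(T.exchange u x c d).leafFinset := card_le_card hsub

lemma eq_or_eq_of_degree_exchange_eq_one (hux : u ≠ x) (hn : ¬T.Adj u x) (huc : u ≠ c)
    (hud : u ≠ d) (hcx : c ≠ x) (hu : T.degree u ≠ 0) (hx : T.degree x ≠ 0) {z : V}
    (hz : (T.exchange u x c d).degree z = 1) (hz' : T.degree z ≠ 1) : z = c ∨ z = d := by
  by_contra! ⟨hzc, hzd⟩
  by_cases hzu : z = u
  · rw [hzu, degree_exchange_eq_add_one huc hud hux hn] at hz
    omega
  by_cases hzx : z = x
  · rw [hzx, exchange_comm_left, degree_exchange_eq_add_one hcx.symm (hzx ▸ hzd) hux.symm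
      (fun h ↦ hn h.symm)] at hz
    omega
  exact hz' (by rwa [degree_exchange_of_ne hzu hzx hzc hzd] at hz)

theorem exists_isTree_exchange_snd (hTG : T ≤ G) (hT : T.IsTree) {v x d : V} (hvx : G.Adj v x)
    (hn : ¬T.Adj v x) {p : T.Walk v x} (hp : p.IsPath) (hv : T.degree v ≠ 1)
    (hc : T.degree p.snd = 2) (hcd : T.Adj p.snd d) (hvd : v ≠ d) (hd : T.degree d = 2) :
    ∃ T' ≤ G, T'.IsTree ∧ #T.leafFinset + 1 ≤ #T'.leafFinset ∧
      ∀ z, T'.degree z = 1 → T.degree z ≠ 1 → z = p.snd ∨ z = d := by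
  have hvc : T.Adj v p.snd := p.adj_snd (Walk.not_nil_of_ne hvx.ne)
  have hxc : T.Adj x p.reverse.snd := p.reverse.adj_snd (Walk.not_nil_of_ne hvx.ne.symm)
  have hcx : p.snd ≠ x := fun h ↦ hn (h ▸ hvc)
  have hf : s(p.snd, d) ∈ p.reverse.edges := by
    simpa using hp.mk_snd_mem_edges hvx.ne hcx hc hcd hvd
  refine ⟨T.exchange v x p.snd d, exchange_le hTG hvx, hT.exchange hvx.ne hn hp.reverse hf,
    card_leafFinset_exchange hvc.ne hvd hcx hcd hv hc hd,
    fun z ↦ eq_or_eq_of_degree_exchange_eq_one hvx.ne hn hvc.ne hvd hcx ?_ ?_⟩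
  · exact (degree_pos_iff_exists_adj T v).2 ⟨_, hvc⟩ |>.ne'
  · exact (degree_pos_iff_exists_adj T x).2 ⟨_, hxc⟩ |>.ne'

end Leaves

end SimpleGraph

open SimpleGraph

open scoped Classical in
theorem stmt19_general {V : Type*} [Fintype V] (G T : SimpleGraph V)
    (hsub : T ≤ G) (hT : T.IsTree) (s : ℕ)
    (hs : (Finset.univ.filter fun z : V => T.degree z = 1).card = s)
    (a b : V) (w : T.Walk a b) (hw : w.IsPath)
    (hdeg : ∀ u ∈ w.support, u ≠ a → u ≠ b → T.degree u = 2)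
    (i : ℕ) (hi1 : 3 ≤ i) (hi2 : i ≤ w.length - 3)
    (x : V) (hadj : G.Adj (w.getVert i) x) (hnotT : s(w.getVert i, x) ∉ T.edgeSet) :
    ∃ T' : SimpleGraph V, T' ≤ G ∧ T'.IsTree ∧
      s + 1 ≤ (Finset.univ.filter fun z : V => T'.degree z = 1).card ∧
      ∀ z : V, T'.degree z = 1 → T.degree z ≠ 1 →
        z ∈ w.support ∧ z ≠ a ∧ z ≠ b := by
  have hinner : ∀ j, 0 < j → j < w.length →
      w.getVert j ∈ w.support ∧ w.getVert j ≠ a ∧ w.getVert j ≠ b := fun j h0 hj ↦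
    ⟨w.getVert_mem_support j, by rw [ne_eq, hw.getVert_eq_start_iff hj.le]; omega,
      by rw [ne_eq, hw.getVert_eq_end_iff hj.le]; omega⟩
  have hdeg2 : ∀ j, 0 < j → j < w.length → T.degree (w.getVert j) = 2 := fun j h0 hj ↦
    hdeg _ (hinner j h0 hj).1 (hinner j h0 hj).2.1 (hinner j h0 hj).2.2
  have hinj : ∀ j k, j ≤ w.length → k ≤ w.length → w.getVert j = w.getVert k → j = k :=
    fun _ _ hj hk ↦ hw.getVert_injOn hj hk
  obtain ⟨p, hp⟩ := hT.connected.exists_isPath (w.getVert i) x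
  -- The `T`-path from `v_i` to `x` starts with `v_j = v_{i ± 1}`; `v_k = v_{i ± 2}` lies beyond it.
  obtain ⟨j, k, hj, hk, hc, hjk, hki⟩ : ∃ j k, (0 < j ∧ j < w.length) ∧ (0 < k ∧ k < w.length) ∧
      p.snd = w.getVert j ∧ T.Adj (w.getVert j) (w.getVert k) ∧ k ≠ i := by
    obtain ⟨m, rfl⟩ : ∃ m, i = m + 3 := ⟨i - 3, by omega⟩
    have hne : w.getVert (m + 2) ≠ w.getVert (m + 4) := fun h ↦ by
      have := hinj _ _ (by omega) (by omega) h
      omega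
    rcases eq_or_eq_of_degree_eq_two (hdeg2 (m + 3) (by omega) (by omega))
      (w.adj_getVert_succ (i := m + 2) (by omega)).symm (w.adj_getVert_succ (by omega)) hne
      (p.adj_snd (Walk.not_nil_of_ne hadj.ne)) with h | h
    · exact ⟨m + 2, m + 1, by omega, by omega, h, (w.adj_getVert_succ (by omega)).symm, by omega⟩
    · exact ⟨m + 4, m + 5, by omega, by omega, h, w.adj_getVert_succ (by omega), by omega⟩
  have hik : w.getVert i ≠ w.getVert k := fun h ↦
    hki (hinj _ _ (by omega) (by omega) h).symm
  obtain ⟨T', hT'G, hT', hcard, hnew⟩ := exists_isTree_exchange_snd hsub hT hadj hnotT hp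
    (by rw [hdeg2 i (by omega) (by omega)]; decide) (hc ▸ hdeg2 j hj.1 hj.2) (hc ▸ hjk) hik
    (hdeg2 k hk.1 hk.2)
  refine ⟨T', hT'G, hT', by rw [← hs]; exact hcard, fun z hz hz' ↦ ?_⟩
  rcases hnew z hz hz' with rfl | rfl
  · exact hc ▸ hinner j hj.1 hj.2
  · exact hinner k hk.1 hk.2

open scoped Classical in
/-- If a spanning tree T of G with s leaves has a degree-2-path P = (v₀, ..., v_d), d ≥ 7,
and some strictly internal vertex v_i (3 ≤ i ≤ d - 3) has a G-neighbor x with v_i x not an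
edge of T, then G has a spanning tree with at least s + 1 leaves all of whose new leaves
are internal vertices of P. -/
theorem stmt19 {V : Type*} [Fintype V] (G T : SimpleGraph V) (hG : G.Connected)
    (hsub : T ≤ G) (hT : T.IsTree) (s : ℕ)
    (hs : (Finset.univ.filter fun z : V => T.degree z = 1).card = s)
    (a b : V) (w : T.Walk a b) (hw : w.IsPath) (hd : 7 ≤ w.length)
    (hdeg : ∀ u ∈ w.support, u ≠ a → u ≠ b → T.degree u = 2)
    (i : ℕ) (hi1 : 3 ≤ i) (hi2 : i ≤ w.length - 3)
    (x : V) (hadj : G.Adj (w.getVert i) x) (hnotT : s(w.getVert i, x) ∉ T.edgeSet) :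
    ∃ T' : SimpleGraph V, T' ≤ G ∧ T'.IsTree ∧
      s + 1 ≤ (Finset.univ.filter fun z : V => T'.degree z = 1).card ∧
      ∀ z : V, T'.degree z = 1 → T.degree z ≠ 1 →
        z ∈ w.support ∧ z ≠ a ∧ z ≠ b :=
  stmt19_general G T hsub hT s hs a b w hw hdeg i hi1 hi2 x hadj hnotT
end
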